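/- The Thue–Morse morphism μ preserves lexicographic order on infinite binary words: for infinite binary words x, y, x < y lexicographically if and only if μ(x) < μ(y) lexicographically. -/
import Mathlib


/-- The Thue–Morse morphism applied to an infinite binary word:
μ(0)=01, μ(1)=10. -/
def muSeq (y : ℕ → Fin 2) : ℕ → Fin 2 :=
  fun n => if n % 2 = 0 then y (n / 2) else 1 - y (n / 2)

/-- Strict lexicographic order on infinite binary words (with 0 < 1). -/
def LexLt (x y : ℕ → Fin 2) : Prop :=
  ∃ n : ℕ, (∀ m < n, x m = y m) ∧ x n < y n

/-- μ preserves lexicographic order on infinite binary words. -/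
theorem mu_preserves_lex_order (x y : ℕ → Fin 2) :
    LexLt x y ↔ LexLt (muSeq x) (muSeq y) := by
  constructor
  · rintro ⟨n, hpre, hlt⟩
    refine ⟨2 * n, ?_, ?_⟩
    · intro m hm
      have hm2 : m / 2 < n := by omega
      have := hpre _ hm2
      simp only [muSeq]
      split
      · exact this
      · rw [this]
    · have h0 : (2 * n) % 2 = 0 := by omega
      have h1 : (2 * n) / 2 = n := by omega
      simp [muSeq, h0, h1]
      exact hlt
  · rintro ⟨n, hpre, hlt⟩
    have heven : n % 2 = 0 := by
      by_contra hodd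
      have hodd' : n % 2 = 1 := by omega
      have hn1 : n - 1 < n := by omega
      have h := hpre _ hn1
      have he : (n - 1) % 2 = 0 := by omega
      have hd : (n - 1) / 2 = n / 2 := by omega
      simp [muSeq, he, hd] at h
      simp [muSeq, hodd'] at hlt
      rw [h] at hlt
      exact lt_irrefl _ hlt
    refine ⟨n / 2, ?_, ?_⟩
    · intro m hm
      have h2m : 2 * m < n := by omega
      have := hpre _ h2m
      have h0 : (2 * m) % 2 = 0 := by omega
      have h1 : (2 * m) / 2 = m := by omega
      simpa [muSeq, h0, h1] using this
    · simpa [muSeq, heven] using hlt
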